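/- The CNOT gate with control qubit 1 and target qubit 2 satisfies CNOT = c • (I₂ ⊗ H) · (R_Z(-π/2) ⊗ R_Z(-π/2)) · ZZ(π/2) · (I₂ ⊗ H) for some complex c with |c| = 1. -/

import Mathlib

open Matrix
open scoped Kronecker Real

noncomputable section

def PZ : Matrix (Fin 2) (Fin 2) ℂ := !![1, 0; 0, -1]

def Hgate : Matrix (Fin 2) (Fin 2) ℂ := (1 / Real.sqrt 2 : ℝ) • !![1, 1; 1, -1]

def RZ (θ : ℝ) : Matrix (Fin 2) (Fin 2) ℂ :=
  NormedSpace.exp (((-(θ / 2) : ℝ) • Complex.I) • PZ)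

def ZZg (α : ℝ) : Matrix (Fin 2 × Fin 2) (Fin 2 × Fin 2) ℂ :=
  NormedSpace.exp (((-(α / 2) : ℝ) • Complex.I) • (PZ ⊗ₖ PZ))

def I₂ : Matrix (Fin 2) (Fin 2) ℂ := 1

/-- The CNOT gate with control on the first qubit and target on the second,
i.e. the matrix `!![1,0,0,0; 0,1,0,0; 0,0,0,1; 0,0,1,0]` written with indices in
`Fin 2 × Fin 2`: it sends basis state `(a, b)` to `(a, b + a)`. -/
def CNOT : Matrix (Fin 2 × Fin 2) (Fin 2 × Fin 2) ℂ :=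
  Matrix.of fun p q => if p.1 = q.1 ∧ p.2 = q.2 + q.1 then 1 else 0

/-!
Conjugating by `1 ⊗ H` turns a controlled `U` into a controlled `H U H`, because `H² = 1`; since
`H Z H = X`, it turns the controlled-`Z` gate into CNOT. All of `R_Z(-π/2) ⊗ R_Z(-π/2)` and
`ZZ(π/2)` are diagonal, and their product has the phase `e^{iπ/4}` on `|00⟩, |01⟩, |10⟩` and
`e^{-3iπ/4} = -e^{iπ/4}` on `|11⟩`, i.e. it is `e^{iπ/4}` times the controlled-`Z` gate.
-/

open Complex

def PX : Matrix (Fin 2) (Fin 2) ℂ := !![0, 1; 1, 0]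

section Controlled

variable {R n : Type*} [DecidableEq n]

def controlled [Semiring R] (U : Matrix n n R) :
    Matrix (Fin 2 × n) (Fin 2 × n) R :=
  diagonal ![1, 0] ⊗ₖ 1 + diagonal ![0, 1] ⊗ₖ U

theorem one_kronecker_mul_controlled_mul [CommSemiring R] [Fintype n]
    {V W : Matrix n n R} (U : Matrix n n R) (hVW : V * W = 1) :
    (1 ⊗ₖ V) * controlled U * (1 ⊗ₖ W) = controlled (V * U * W) := by
  simp only [controlled, add_mul, mul_add, ← mul_kronecker_mul, one_mul, mul_one, hVW]

theorem controlled_diagonal [Semiring R] (d : n → R) :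
    controlled (diagonal d) = diagonal fun p => if p.1 = 0 then 1 else d p.2 := by
  rw [controlled, ← diagonal_one, diagonal_kronecker_diagonal, diagonal_kronecker_diagonal,
    diagonal_add]
  congr 1
  funext ⟨a, b⟩
  fin_cases a <;> simp

end Controlled

theorem exp_smul_diagonal {n : Type*} [Fintype n] [DecidableEq n] (c : ℂ) (d : n → ℂ) :
    NormedSpace.exp (c • diagonal d) = diagonal fun i => exp (c * d i) := by
  rw [← diagonal_smul, exp_diagonal]
  congr 1
  funext i
  rw [Pi.exp_def, exp_eq_exp_ℂ]
  rfl

theorem PZ_eq_diagonal : PZ = diagonal ![1, -1] := by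
  ext i j
  fin_cases i <;> fin_cases j <;> simp [PZ]

theorem Hgate_mul_mul_Hgate (A : Matrix (Fin 2) (Fin 2) ℂ) :
    Hgate * A * Hgate = (1 / 2 : ℝ) • (!![1, 1; 1, -1] * A * !![1, 1; 1, -1]) := by
  have h : (1 / √2 : ℝ) * (1 / √2) = 1 / 2 := by
    rw [div_mul_div_comm, Real.mul_self_sqrt zero_le_two, one_mul]
  rw [Hgate, smul_mul_assoc, smul_mul_assoc, mul_smul_comm, smul_smul, h]

theorem Hgate_mul_Hgate : Hgate * Hgate = 1 := by
  have h := Hgate_mul_mul_Hgate 1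
  rw [mul_one, mul_one] at h
  rw [h]
  ext i j
  fin_cases i <;> fin_cases j <;> norm_num

theorem Hgate_mul_PZ_mul_Hgate : Hgate * PZ * Hgate = PX := by
  rw [Hgate_mul_mul_Hgate]
  ext i j
  fin_cases i <;> fin_cases j <;> norm_num [PZ, PX]

theorem CNOT_eq_controlled_PX : CNOT = controlled PX := by
  ext ⟨a, b⟩ ⟨c, d⟩
  fin_cases a <;> fin_cases b <;> fin_cases c <;> fin_cases d <;> simp [CNOT, controlled, PX]

theorem RZ_eq_diagonal (θ : ℝ) :
    RZ θ = diagonal fun a => exp (-(θ / 2) * I * ![1, -1] a) := by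
  rw [RZ, PZ_eq_diagonal, exp_smul_diagonal]
  simp only [real_smul]
  push_cast
  rfl

theorem ZZg_eq_diagonal (α : ℝ) :
    ZZg α = diagonal fun p => exp (-(α / 2) * I * (![1, -1] p.1 * ![1, -1] p.2)) := by
  rw [ZZg, PZ_eq_diagonal, diagonal_kronecker_diagonal, exp_smul_diagonal]
  simp only [real_smul]
  push_cast
  rfl

theorem RZ_kronecker_RZ_mul_ZZg :
    (RZ (-(π / 2)) ⊗ₖ RZ (-(π / 2))) * ZZg (π / 2) = exp (π / 4 * I) • controlled PZ := by
  rw [RZ_eq_diagonal, ZZg_eq_diagonal, diagonal_kronecker_diagonal, diagonal_mul_diagonal,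
    PZ_eq_diagonal, controlled_diagonal, ← diagonal_smul]
  congr 1
  funext ⟨a, b⟩
  simp only [← exp_add, Pi.smul_apply, smul_eq_mul]
  fin_cases a <;> fin_cases b <;>
    simp only [Fin.zero_eta, Fin.mk_one, Fin.isValue, cons_val_zero, cons_val_one,
      cons_val_fin_one, ↓reduceIte, one_ne_zero, mul_one, mul_neg, neg_neg, ofReal_neg]
  · congr 1; push_cast; ring
  · congr 1; push_cast; ring
  · congr 1; push_cast; ring
  · rw [← exp_sub_pi_mul_I]; congr 1; push_cast; ring

theorem CNOT_eq_H_rotations_ZZ_H :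
    ∃ c : ℂ, ‖c‖ = 1 ∧
      CNOT = c • ((I₂ ⊗ₖ Hgate) * (RZ (-(π / 2)) ⊗ₖ RZ (-(π / 2))) * ZZg (π / 2) *
        (I₂ ⊗ₖ Hgate)) := by
  refine ⟨exp (-(π / 4 * I)), by simp [norm_exp], ?_⟩
  calc CNOT = controlled PX := CNOT_eq_controlled_PX
    _ = (1 ⊗ₖ Hgate) * controlled PZ * (1 ⊗ₖ Hgate) := by
      rw [one_kronecker_mul_controlled_mul _ Hgate_mul_Hgate, Hgate_mul_PZ_mul_Hgate]
    _ = _ := by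
      rw [mul_assoc (I₂ ⊗ₖ Hgate), RZ_kronecker_RZ_mul_ZZg, mul_smul_comm, smul_mul_assoc,
        smul_smul, ← exp_add, neg_add_cancel, exp_zero, one_smul, I₂]

end
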